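/- Let p ≥ 2 be even and x ∈ ℝ. As T → ∞, (1/π)∫₀^T cos(u^{p+1}/(p+1) + xu) du converges to Ai_p(x), with error term O(T^{-p}): specifically |Ai_p(x) - (1/π)∫₀^T cos(u^{p+1}/(p+1)+xu) du| ≤ C_x / T^p for T > (C|x|)^{1/p} and some constant C_x depending on x. -/

import Mathlib

open Real Filter intervalIntegral Set

/-! For `a > 0` with `a ^ p ≥ 2|x|` the phase `φ u = u^(p+1)/(p+1) + x u` has nondecreasing
derivative `φ' u = u^p + x ≥ a^p / 2` on `[a, b]`. Integrating `cos φ = (1/φ') (sin φ)'` by parts,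
the boundary terms and the remaining integral are controlled by `1/φ' a`, since `1/φ'` is
nonincreasing and positive (van der Corput's first-derivative estimate); hence
`|∫_a^b cos φ| ≤ 4 / a^p`. The truncated integrals are therefore Cauchy as `T → ∞`, and letting
`b → ∞` in the tail bound gives the rate `O(T^{-p})`. -/

theorem abs_integral_mul_deriv_le_two_mul {f f' ψ ψ' : ℝ → ℝ} {a b : ℝ} (hab : a ≤ b)
    (hf : ∀ t ∈ Icc a b, HasDerivAt f (f' t) t) (hψ : ∀ t ∈ Icc a b, HasDerivAt ψ (ψ' t) t)
    (hf'_int : IntervalIntegrable f' MeasureTheory.volume a b)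
    (hψ'_int : IntervalIntegrable ψ' MeasureTheory.volume a b)
    (hf'_nonpos : ∀ t ∈ Icc a b, f' t ≤ 0) (hfb : 0 ≤ f b) (hψ_le : ∀ t ∈ Icc a b, |ψ t| ≤ 1) :
    |∫ t in a..b, f t * ψ' t| ≤ 2 * f a := by
  rw [← uIcc_of_le hab] at hf hψ
  have hf_sub : ∫ t in a..b, -f' t = f a - f b := by
    rw [integral_neg, integral_eq_sub_of_hasDerivAt hf hf'_int, neg_sub]
  have hfa : f b ≤ f a := by
    have := integral_nonneg (μ := MeasureTheory.volume) hab fun t ht =>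
      neg_nonneg.2 (hf'_nonpos t ht)
    linarith
  have hrem : |∫ t in a..b, f' t * ψ t| ≤ f a - f b := by
    rw [← hf_sub, ← Real.norm_eq_abs]
    refine norm_integral_le_of_norm_le (g := fun t => -f' t) hab (.of_forall fun t ht => ?_)
      hf'_int.neg
    have ht : t ∈ Icc a b := Ioc_subset_Icc_self ht
    rw [Real.norm_eq_abs, abs_mul, abs_of_nonpos (hf'_nonpos t ht)]
    exact mul_le_of_le_one_right (neg_nonneg.2 (hf'_nonpos t ht)) (hψ_le t ht)
  have hbdry : ∀ t ∈ Icc a b, 0 ≤ f t → |f t * ψ t| ≤ f t := fun t ht hft => by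
    rw [abs_mul, abs_of_nonneg hft]
    exact mul_le_of_le_one_right hft (hψ_le t ht)
  have := hbdry a (left_mem_Icc.2 hab) (hfb.trans hfa)
  have := hbdry b (right_mem_Icc.2 hab) hfb
  have := abs_sub (f b * ψ b - f a * ψ a) (∫ t in a..b, f' t * ψ t)
  have := abs_sub (f b * ψ b) (f a * ψ a)
  rw [integral_mul_deriv_eq_deriv_mul hf hψ hf'_int hψ'_int]
  linarith

theorem abs_integral_cos_le_two_div_deriv {φ φ' φ'' : ℝ → ℝ} {a b : ℝ} (hab : a ≤ b)
    (hφ : ∀ t ∈ Icc a b, HasDerivAt φ (φ' t) t) (hφ' : ∀ t ∈ Icc a b, HasDerivAt φ' (φ'' t) t)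
    (hφ''_cont : ContinuousOn φ'' (Icc a b)) (hφ''_nonneg : ∀ t ∈ Icc a b, 0 ≤ φ'' t)
    (hφ'a : 0 < φ' a) :
    |∫ t in a..b, cos (φ t)| ≤ 2 / φ' a := by
  have hφ_cont : ContinuousOn φ (Icc a b) := fun t ht => (hφ t ht).continuousAt.continuousWithinAt
  have hφ'_cont : ContinuousOn φ' (Icc a b) := fun t ht =>
    (hφ' t ht).continuousAt.continuousWithinAt
  have hφ'_mono : MonotoneOn φ' (Icc a b) :=
    monotoneOn_of_hasDerivWithinAt_nonneg (convex_Icc a b) hφ'_cont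
      (fun t ht => (hφ' t (interior_subset ht)).hasDerivWithinAt)
      (fun t ht => hφ''_nonneg t (interior_subset ht))
  have hφ'_pos : ∀ t ∈ Icc a b, 0 < φ' t := fun t ht =>
    hφ'a.trans_le (hφ'_mono (left_mem_Icc.2 hab) ht ht.1)
  have hcos : ∫ t in a..b, cos (φ t) = ∫ t in a..b, (φ' t)⁻¹ * (cos (φ t) * φ' t) := by
    refine integral_congr fun t ht => ?_
    rw [uIcc_of_le hab] at ht
    field_simp [(hφ'_pos t ht).ne']
  rw [hcos, div_eq_mul_inv]
  refine abs_integral_mul_deriv_le_two_mul (ψ := fun t => sin (φ t)) hab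
    (fun t ht => (hφ' t ht).inv (hφ'_pos t ht).ne') (fun t ht => (hφ t ht).sin)
    ?_ ?_ (fun t ht => ?_) (inv_nonneg.2 (hφ'_pos b (right_mem_Icc.2 hab)).le)
    (fun t _ => abs_sin_le_one _)
  · refine ContinuousOn.intervalIntegrable_of_Icc hab ?_
    exact hφ''_cont.neg.div (hφ'_cont.pow 2) fun t ht => pow_ne_zero 2 (hφ'_pos t ht).ne'
  · exact ContinuousOn.intervalIntegrable_of_Icc hab
      ((continuous_cos.comp_continuousOn hφ_cont).mul hφ'_cont)
  · exact div_nonpos_of_nonpos_of_nonneg (neg_nonpos.2 (hφ''_nonneg t ht)) (sq_nonneg _)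

noncomputable def airyPhase (p : ℕ) (x u : ℝ) : ℝ := u ^ (p + 1) / (p + 1) + x * u

theorem hasDerivAt_airyPhase (p : ℕ) (x u : ℝ) :
    HasDerivAt (airyPhase p x) (u ^ p + x) u := by
  have h := ((hasDerivAt_pow (p + 1) u).div_const ((p : ℝ) + 1)).add
    ((hasDerivAt_id' u).const_mul x)
  refine h.congr_deriv ?_
  push_cast
  field_simp

theorem abs_integral_cos_airyPhase_le (p : ℕ) (x : ℝ) {a b : ℝ} (ha : 0 < a)
    (hax : 2 * |x| ≤ a ^ p) (hab : a ≤ b) :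
    |∫ u in a..b, cos (airyPhase p x u)| ≤ 4 / a ^ p := by
  have hap : 0 < a ^ p := pow_pos ha p
  have hφ'a : a ^ p / 2 ≤ a ^ p + x := by linarith [neg_abs_le x]
  calc |∫ u in a..b, cos (airyPhase p x u)| ≤ 2 / (a ^ p + x) :=
        abs_integral_cos_le_two_div_deriv hab (fun u _ => hasDerivAt_airyPhase p x u)
          (fun u _ => (hasDerivAt_pow p u).add_const x) (by fun_prop)
          (fun u hu => by have := ha.trans_le hu.1; positivity) (by linarith)
    _ ≤ 2 / (a ^ p / 2) := by gcongr
    _ = 4 / a ^ p := by ring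

theorem exists_tendsto_and_norm_sub_le {ι E : Type*} [SemilatticeSup ι] [Nonempty ι]
    [NormedAddCommGroup E] [CompleteSpace E] {F : ι → E} {g : ι → ℝ}
    (hF : ∀ᶠ a in atTop, ∀ b, a ≤ b → ‖F b - F a‖ ≤ g a) (hg : Tendsto g atTop (nhds 0)) :
    ∃ A, Tendsto F atTop (nhds A) ∧ ∀ a, (∀ b, a ≤ b → ‖F b - F a‖ ≤ g a) → ‖A - F a‖ ≤ g a := by
  have hcauchy : CauchySeq F := Metric.cauchySeq_iff'.2 fun ε hε => by
    obtain ⟨N, hN⟩ := (hF.and (hg.eventually_lt_const hε)).exists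
    exact ⟨N, fun n hn => (dist_eq_norm _ _).trans_lt ((hN.1 n hn).trans_lt hN.2)⟩
  obtain ⟨A, hA⟩ := cauchySeq_tendsto_of_complete hcauchy
  refine ⟨A, hA, fun a ha => le_of_tendsto ((hA.sub_const (F a)).norm) ?_⟩
  exact eventually_atTop.2 ⟨a, ha⟩

theorem pAiry_truncation_rate_general (p : ℕ) (hp : 2 ≤ p) (x : ℝ) :
    ∃ A : ℝ,
      Tendsto (fun T : ℝ =>
          (1 / Real.pi) * ∫ u in (0:ℝ)..T, Real.cos (u ^ (p + 1) / (p + 1) + x * u))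
        atTop (nhds A) ∧
      ∃ C : ℝ, 0 < C ∧ ∃ Cx : ℝ, 0 < Cx ∧
        ∀ T : ℝ, (C * |x|) ^ ((1:ℝ) / p) < T →
          |A - (1 / Real.pi) * ∫ u in (0:ℝ)..T, Real.cos (u ^ (p + 1) / (p + 1) + x * u)| ≤
            Cx / T ^ p := by
  let F : ℝ → ℝ := fun T => ∫ u in (0:ℝ)..T, cos (airyPhase p x u)
  have hcont : Continuous fun u => cos (airyPhase p x u) := by
    unfold airyPhase
    fun_prop
  have htail : ∀ a, (2 * |x|) ^ ((1:ℝ) / p) < a → ∀ b, a ≤ b → ‖F b - F a‖ ≤ 4 / a ^ p := by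
    intro a ha b hab
    have ha0 : 0 < a := (rpow_nonneg (by positivity) _).trans_lt ha
    rw [one_div, rpow_inv_lt_iff_of_pos (by positivity) ha0.le (by positivity), rpow_natCast] at ha
    rw [Real.norm_eq_abs, integral_interval_sub_left (hcont.intervalIntegrable _ _)
      (hcont.intervalIntegrable _ _)]
    exact abs_integral_cos_airyPhase_le p x ha0 ha.le hab
  obtain ⟨A, hA, hAF⟩ := exists_tendsto_and_norm_sub_le ((eventually_gt_atTop _).mono htail)
    (tendsto_const_nhds.div_atTop (tendsto_pow_atTop (by omega)))
  refine ⟨1 / π * A, hA.const_mul _, 2, two_pos, 4 / π, by positivity, fun T hT => ?_⟩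
  calc |1 / π * A - 1 / π * F T| = 1 / π * |A - F T| := by
        rw [← mul_sub, abs_mul, abs_of_pos (by positivity)]
    _ ≤ 1 / π * (4 / T ^ p) := by gcongr; exact hAF T (htail T hT)
    _ = 4 / π / T ^ p := by ring

/-- For even `p ≥ 2` and `x ∈ ℝ`, the truncated integrals
`(1/π) ∫₀^T cos(u^{p+1}/(p+1)+xu) du` converge to `Ai_p(x)` as `T → ∞`, with error
`O(T^{-p})`: there are constants `C > 0` and `C_x > 0` such that for all
`T > (C|x|)^{1/p}` the difference is at most `C_x / T^p`. -/
theorem pAiry_truncation_rate (p : ℕ) (hp : 2 ≤ p) (hpe : Even p) (x : ℝ) :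
    ∃ A : ℝ,
      Tendsto (fun T : ℝ =>
          (1 / Real.pi) * ∫ u in (0:ℝ)..T, Real.cos (u ^ (p + 1) / (p + 1) + x * u))
        atTop (nhds A) ∧
      ∃ C : ℝ, 0 < C ∧ ∃ Cx : ℝ, 0 < Cx ∧
        ∀ T : ℝ, (C * |x|) ^ ((1:ℝ) / p) < T →
          |A - (1 / Real.pi) * ∫ u in (0:ℝ)..T, Real.cos (u ^ (p + 1) / (p + 1) + x * u)| ≤
            Cx / T ^ p :=
  pAiry_truncation_rate_general p hp x
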